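/- arXiv:1805.09517 — 4 statements merged into one kernel-verified Lean document; each statement's English description precedes it below -/
import Mathlib

section
/- Let $A$ be a commutative ring, $c > 0$ an odd integer, and $R = A[q^{\pm 1}]$ the Laurent polynomial ring over $A$. Suppose $f \in R$ is supported entirely on even exponents or entirely on odd exponents (i.e., every exponent occurring in $f$ with nonzero coefficient is even, or every such exponent is odd). If $f$ lies in the ideal generated by $q^{c} - 1$, then $f$ lies in the ideal generated by $q^{c} + 1$. -/
/-!
The substitution `T ↦ -T` fixes `f` or negates it, according to the parity of its support, and
sends `T ^ c - 1` to `-(T ^ c + 1)` because `c` is odd. Applying it to `f = (T ^ c - 1) * g`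
therefore exhibits `±f` as a multiple of `T ^ c + 1`.
-/

open LaurentPolynomial

namespace LaurentPolynomial

variable {R : Type*} [CommRing R]

lemma val_zpow_unit_T_one (n : ℤ) : (((isUnit_T 1).unit ^ n : R[T;T⁻¹]ˣ) : R[T;T⁻¹]) = T n := by
  induction n using Int.induction_on with
  | zero => simp [T_zero]
  | succ k ih => rw [zpow_add_one, Units.val_mul, ih, IsUnit.unit_spec, ← T_add]
  | pred k ih =>
    have hinv : (((isUnit_T 1).unit⁻¹ : R[T;T⁻¹]ˣ) : R[T;T⁻¹]) = T (-1) :=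
      Units.inv_eq_of_mul_eq_one_right (by rw [IsUnit.unit_spec, ← T_add, add_neg_cancel, T_zero])
    rw [zpow_sub_one, Units.val_mul, ih, hinv, ← T_add, sub_eq_add_neg]

noncomputable def substNegT : R[T;T⁻¹] →+* R[T;T⁻¹] :=
  eval₂ C (-(isUnit_T (R := R) 1).unit)

lemma substNegT_T_of_even {n : ℤ} (hn : Even n) : substNegT (T n : R[T;T⁻¹]) = T n := by
  rw [substNegT, eval₂_T, hn.neg_zpow, val_zpow_unit_T_one]

lemma substNegT_T_of_odd {n : ℤ} (hn : Odd n) : substNegT (T n : R[T;T⁻¹]) = -T n := by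
  rw [substNegT, eval₂_T, hn.neg_zpow, Units.val_neg, val_zpow_unit_T_one]

lemma substNegT_C (r : R) : substNegT (C r) = C r := by
  rw [substNegT, eval₂_C]

lemma substNegT_eq_self_of_even_support {f : R[T;T⁻¹]} (hf : ∀ i ∈ f.coeff.support, Even i) :
    substNegT f = f := by
  conv_lhs => rw [← f.sum_coeff_single]
  conv_rhs => rw [← f.sum_coeff_single]
  rw [map_finsuppSum]
  refine Finsupp.sum_congr fun n hn => ?_
  rw [single_eq_C_mul_T, map_mul, substNegT_C, substNegT_T_of_even (hf n hn)]

lemma substNegT_eq_neg_of_odd_support {f : R[T;T⁻¹]} (hf : ∀ i ∈ f.coeff.support, Odd i) :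
    substNegT f = -f := by
  conv_lhs => rw [← f.sum_coeff_single]
  conv_rhs => rw [← f.sum_coeff_single]
  rw [map_finsuppSum, ← Finsupp.sum_neg]
  refine Finsupp.sum_congr fun n hn => ?_
  rw [single_eq_C_mul_T, map_mul, substNegT_C, substNegT_T_of_odd (hf n hn), mul_neg]

lemma substNegT_mem_span_T_add_one {c : ℤ} (hc : Odd c) {f : R[T;T⁻¹]}
    (hf : f ∈ Ideal.span {T c - 1}) : substNegT f ∈ Ideal.span {T c + 1} := by
  obtain ⟨g, rfl⟩ := Ideal.mem_span_singleton'.mp hf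
  rw [map_mul, map_sub, map_one, substNegT_T_of_odd hc, ← neg_add', mul_neg]
  exact neg_mem (Ideal.mul_mem_left _ _ (Ideal.mem_span_singleton_self _))

end LaurentPolynomial

theorem stmt_1_general (A : Type*) [CommRing A] (c : ℤ) (hodd : Odd c)
    (f : A[T;T⁻¹])
    (hf : (∀ i ∈ f.coeff.support, Even i) ∨ (∀ i ∈ f.coeff.support, Odd i))
    (hmem : f ∈ Ideal.span {(T c - 1 : A[T;T⁻¹])}) :
    f ∈ Ideal.span {(T c + 1 : A[T;T⁻¹])} := by
  have hσf := substNegT_mem_span_T_add_one hodd hmem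
  rcases hf with hsupp | hsupp
  · rwa [substNegT_eq_self_of_even_support hsupp] at hσf
  · rwa [substNegT_eq_neg_of_odd_support hsupp, neg_mem_iff] at hσf

/-- Let `A` be a commutative ring and `c > 0` an odd integer. If `f ∈ A[q^{±1}]` is
supported entirely on even exponents or entirely on odd exponents, and `f` lies in the
ideal generated by `q^c - 1`, then `f` lies in the ideal generated by `q^c + 1`. -/
theorem stmt_1 (A : Type*) [CommRing A] (c : ℤ) (hc : 0 < c) (hodd : Odd c)
    (f : A[T;T⁻¹])
    (hf : (∀ i ∈ f.coeff.support, Even i) ∨ (∀ i ∈ f.coeff.support, Odd i))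
    (hmem : f ∈ Ideal.span {(T c - 1 : A[T;T⁻¹])}) :
    f ∈ Ideal.span {(T c + 1 : A[T;T⁻¹])} :=
  stmt_1_general A c hodd f hf hmem
end

section
/- Let $A$ be a commutative ring, $c > 0$ an odd integer, and $R = A[q^{\pm 1}]$ the Laurent polynomial ring over $A$. Suppose $f \in R$ is supported entirely on even exponents or entirely on odd exponents. If $f$ lies in the ideal generated by $q^{c} - 1$, then $f$ lies in the ideal generated by $q^{2c} - 1$. -/
open LaurentPolynomial

/-!
Parity of exponents makes `A[q^{±1}]` a `ZMod 2`-graded ring in which `u = q^c` is odd.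
Write `f = g (u - 1)` and split `g = g₀ + g₁` by parity. If `f` is homogeneous of degree `j`,
its component of degree `j + 1`, namely `g_j u - g_{j+1}`, vanishes, so
`f = g_{j+1} u - g_j = g_j (u² - 1)`.
-/

open DirectSum

section ZModTwoGraded

variable {A σ : Type*} [Ring A] [SetLike σ A] [AddSubgroupClass σ A]
  (𝒜 : ZMod 2 → σ) [GradedRing 𝒜]

private theorem add_one_add_one_zmod_two (j : ZMod 2) : j + 1 + 1 = j := by
  rw [add_assoc, CharTwo.add_self_eq_zero, add_zero]

theorem coe_decompose_mul_sub_one_add_one {u : A} (hu : u ∈ 𝒜 1) (g : A) (i : ZMod 2) :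
    (decompose 𝒜 (g * (u - 1)) (i + 1) : A) =
      decompose 𝒜 g i * u - decompose 𝒜 g (i + 1) := by
  rw [mul_sub_one, decompose_sub, DirectSum.sub_apply, AddSubgroupClass.coe_sub,
    coe_decompose_mul_add_of_right_mem 𝒜 hu]

theorem mem_span_sq_sub_one_of_mem_span_sub_one {u f : A} (hu : u ∈ 𝒜 1) {j : ZMod 2}
    (hf : f ∈ 𝒜 j) (hmem : f ∈ Ideal.span {u - 1}) : f ∈ Ideal.span {u ^ 2 - 1} := by
  obtain ⟨g, rfl⟩ := Ideal.mem_span_singleton'.mp hmem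
  have hshift : (decompose 𝒜 g (j + 1) : A) = decompose 𝒜 g j * u := by
    have hzero := decompose_of_mem_ne 𝒜 hf (show j ≠ j + 1 by simp)
    rw [coe_decompose_mul_sub_one_add_one 𝒜 hu] at hzero
    exact (sub_eq_zero.mp hzero).symm
  refine Ideal.mem_span_singleton'.mpr ⟨decompose 𝒜 g j, ?_⟩
  calc (decompose 𝒜 g j : A) * (u ^ 2 - 1)
      = decompose 𝒜 g (j + 1) * u - decompose 𝒜 g (j + 1 + 1) := by
        rw [hshift, add_one_add_one_zmod_two j]; noncomm_ring
    _ = decompose 𝒜 (g * (u - 1)) (j + 1 + 1) :=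
        (coe_decompose_mul_sub_one_add_one 𝒜 hu g _).symm
    _ = g * (u - 1) := by rw [add_one_add_one_zmod_two j, decompose_of_mem_same 𝒜 hf]

end ZModTwoGraded

namespace LaurentPolynomial

/-- `parityGrade A 0` and `parityGrade A 1` are the submodules `R₀` and `R₁`. -/
abbrev parityGrade (A : Type*) [CommRing A] : ZMod 2 → Submodule A A[T;T⁻¹] :=
  AddMonoidAlgebra.gradeBy A (Int.castAddHom (ZMod 2))

variable {A : Type*} [CommRing A]

theorem mem_parityGrade_zero_iff (f : A[T;T⁻¹]) :
    f ∈ parityGrade A 0 ↔ ∀ i ∈ f.coeff.support, Even i := by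
  simp [AddMonoidAlgebra.mem_gradeBy_iff, Set.subset_def, ZMod.intCast_eq_zero_iff_even]

theorem mem_parityGrade_one_iff (f : A[T;T⁻¹]) :
    f ∈ parityGrade A 1 ↔ ∀ i ∈ f.coeff.support, Odd i := by
  simp [AddMonoidAlgebra.mem_gradeBy_iff, Set.subset_def, ZMod.intCast_eq_one_iff_odd]

theorem T_mem_parityGrade_one {n : ℤ} (hn : Odd n) : (T n : A[T;T⁻¹]) ∈ parityGrade A 1 := by
  have h := AddMonoidAlgebra.single_mem_gradeBy (R := A) (Int.castAddHom (ZMod 2)) n 1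
  exact ZMod.intCast_eq_one_iff_odd.mpr hn ▸ h

end LaurentPolynomial

theorem stmt_2_general (A : Type*) [CommRing A] (c : ℤ) (hodd : Odd c)
    (f : A[T;T⁻¹])
    (hf : (∀ i ∈ f.coeff.support, Even i) ∨ (∀ i ∈ f.coeff.support, Odd i))
    (hmem : f ∈ Ideal.span {(T c - 1 : A[T;T⁻¹])}) :
    f ∈ Ideal.span {(T (2 * c) - 1 : A[T;T⁻¹])} := by
  have hTc := T_mem_parityGrade_one (A := A) hodd
  rw [two_mul, T_add, ← sq]
  rcases hf with hf | hf
  · exact mem_span_sq_sub_one_of_mem_span_sub_one _ hTc ((mem_parityGrade_zero_iff f).mpr hf) hmem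
  · exact mem_span_sq_sub_one_of_mem_span_sub_one _ hTc ((mem_parityGrade_one_iff f).mpr hf) hmem

/-- Let `A` be a commutative ring and `c > 0` an odd integer. If `f ∈ A[q^{±1}]` is
supported entirely on even exponents or entirely on odd exponents, and `f` lies in the
ideal generated by `q^c - 1`, then `f` lies in the ideal generated by `q^{2c} - 1`. -/
theorem stmt_2 (A : Type*) [CommRing A] (c : ℤ) (hc : 0 < c) (hodd : Odd c)
    (f : A[T;T⁻¹])
    (hf : (∀ i ∈ f.coeff.support, Even i) ∨ (∀ i ∈ f.coeff.support, Odd i))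
    (hmem : f ∈ Ideal.span {(T c - 1 : A[T;T⁻¹])}) :
    f ∈ Ideal.span {(T (2 * c) - 1 : A[T;T⁻¹])} :=
  stmt_2_general A c hodd f hf hmem
end

section
/- Let $p$ be an odd prime and $R = \mathbb{Z}[q^{\pm 1}]$. Suppose $f \in R$ is supported entirely on even exponents or entirely on odd exponents. If $f$ lies in the ideal $(p, q^{p} - 1)$ generated by $p$ and $q^{p} - 1$, then $f$ lies in the ideal $(p, q^{2p} - 1)$ generated by $p$ and $q^{2p} - 1$. -/
/-!
The substitution `T ↦ -T` is a ring automorphism of `ℤ[T;T⁻¹]` fixing `p`, sending `T^p - 1`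
to `-(T^p + 1)` since `p` is odd, and acting as `±1` on a Laurent polynomial supported in one
parity class. Hence `f ∈ (p, T^p - 1)` also gives `f ∈ (p, T^p + 1)`, and then
`2 f = (T^p + 1) f - (T^p - 1) f ∈ (p, T^{2p} - 1)`. As `2` is invertible modulo the odd
number `p`, `f` itself lies in `(p, T^{2p} - 1)`.
-/

open LaurentPolynomial

namespace Ideal

variable {A : Type*} [CommRing A]

theorem sub_mul_mem_span_pair_mul {a b c x : A} (hb : x ∈ span {a, b}) (hc : x ∈ span {a, c}) :
    (c - b) * x ∈ span {a, b * c} := by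
  obtain ⟨r, s, rfl⟩ := mem_span_pair.mp hb
  obtain ⟨r', s', hx⟩ := mem_span_pair.mp hc
  refine mem_span_pair.mpr ⟨c * r - b * r', s - s', ?_⟩
  linear_combination -b * hx

theorem mem_of_two_mul_mem_of_odd {I : Ideal A} {n : ℕ} (hn : Odd n) (hnI : (n : A) ∈ I)
    {x : A} (hx : 2 * x ∈ I) : x ∈ I := by
  obtain ⟨k, rfl⟩ := hn
  have hx_eq : x = ((2 * k + 1 : ℕ) : A) * x - k * (2 * x) := by push_cast; ring
  rw [hx_eq]
  exact I.sub_mem (I.mul_mem_right x hnI) (I.mul_mem_left _ hx)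

end Ideal

namespace LaurentPolynomial

variable {R : Type*} [CommRing R]

theorem val_unit_T_one_zpow (n : ℤ) :
    (((isUnit_T (R := R) 1).unit ^ n : (R[T;T⁻¹])ˣ) : R[T;T⁻¹]) = T n := by
  induction n using Int.induction_on with
  | zero => simp [T_zero]
  | succ k ih => rw [zpow_add_one, Units.val_mul, ih, IsUnit.unit_spec, T_add]
  | pred k ih =>
    rw [zpow_sub_one, Units.val_mul, ih, T_sub, Units.inv_eq_of_mul_eq_one_right]
    rw [IsUnit.unit_spec, ← T_add, add_neg_cancel, T_zero]

noncomputable def negT : R[T;T⁻¹] →+* R[T;T⁻¹] :=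
  eval₂ C (-(isUnit_T (R := R) 1).unit)

theorem negT_T_of_even {n : ℤ} (hn : Even n) : negT (T n : R[T;T⁻¹]) = T n := by
  rw [negT, eval₂_T, hn.neg_zpow, val_unit_T_one_zpow]

theorem negT_T_of_odd {n : ℤ} (hn : Odd n) : negT (T n : R[T;T⁻¹]) = -T n := by
  rw [negT, eval₂_T, hn.neg_zpow, Units.val_neg, val_unit_T_one_zpow]

theorem negT_eq_mul_of_forall_mem_support {f : R[T;T⁻¹]} (ε : R[T;T⁻¹])
    (h : ∀ n ∈ f.coeff.support, negT (T n) = ε * T n) : negT f = ε * f := by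
  have hf : f = f.coeff.sum fun n r => C r * T n := by
    simp only [← single_eq_C_mul_T]
    exact (AddMonoidAlgebra.sum_coeff_single f).symm
  rw [hf, map_finsuppSum, Finsupp.mul_sum]
  refine Finsupp.sum_congr fun n hn => ?_
  rw [map_mul, h n hn, negT, eval₂_C]
  ring

theorem negT_of_even_support {f : R[T;T⁻¹]} (hf : ∀ n ∈ f.coeff.support, Even n) :
    negT f = f := by
  simpa using negT_eq_mul_of_forall_mem_support 1 fun n hn => by
    rw [negT_T_of_even (hf n hn), one_mul]

theorem negT_of_odd_support {f : R[T;T⁻¹]} (hf : ∀ n ∈ f.coeff.support, Odd n) :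
    negT f = -f := by
  simpa using negT_eq_mul_of_forall_mem_support (-1) fun n hn => by
    rw [negT_T_of_odd (hf n hn), neg_one_mul]

theorem mem_span_T_add_one_of_mem_span_T_sub_one {a f : R[T;T⁻¹]} {m : ℤ} (hm : Odd m)
    (ha : negT a = a) (hf : negT f = f ∨ negT f = -f) (h : f ∈ Ideal.span {a, T m - 1}) :
    f ∈ Ideal.span {a, T m + 1} := by
  have hmap := Ideal.mem_map_of_mem negT h
  rw [Ideal.map_span, Set.image_pair, ha, map_sub, negT_T_of_odd hm, map_one,
    show -T m - 1 = -(T m + 1 : R[T;T⁻¹]) by ring, Ideal.span_insert,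
    Ideal.span_singleton_neg, ← Ideal.span_insert] at hmap
  rcases hf with hf | hf
  · rwa [hf] at hmap
  · rwa [hf, neg_mem_iff] at hmap

end LaurentPolynomial

theorem stmt_4_general (p : ℕ) (hodd : Odd p)
    (f : ℤ[T;T⁻¹])
    (hf : (∀ i ∈ f.coeff.support, Even i) ∨ (∀ i ∈ f.coeff.support, Odd i))
    (hmem : f ∈ Ideal.span {(p : ℤ[T;T⁻¹]), T (p : ℤ) - 1}) :
    f ∈ Ideal.span {(p : ℤ[T;T⁻¹]), T (2 * (p : ℤ)) - 1} := by
  have hplus : f ∈ Ideal.span {(p : ℤ[T;T⁻¹]), T (p : ℤ) + 1} :=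
    mem_span_T_add_one_of_mem_span_T_sub_one (by exact_mod_cast hodd) (map_natCast _ p)
      (hf.imp negT_of_even_support negT_of_odd_support) hmem
  have htwo := Ideal.sub_mul_mem_span_pair_mul hmem hplus
  rw [show (T p + 1) - (T p - 1) = (2 : ℤ[T;T⁻¹]) by ring,
    show (T p - 1) * (T p + 1) = T (2 * p) - (1 : ℤ[T;T⁻¹]) by rw [two_mul, T_add]; ring] at htwo
  exact Ideal.mem_of_two_mul_mem_of_odd hodd (Ideal.subset_span (Set.mem_insert _ _)) htwo

/-- Let `p` be an odd prime. If `f ∈ ℤ[q^{±1}]` is supported entirely on even exponents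
or entirely on odd exponents, and `f ∈ (p, q^p - 1)`, then `f ∈ (p, q^{2p} - 1)`. -/
theorem stmt_4 (p : ℕ) (hp : p.Prime) (hodd : Odd p)
    (f : ℤ[T;T⁻¹])
    (hf : (∀ i ∈ f.coeff.support, Even i) ∨ (∀ i ∈ f.coeff.support, Odd i))
    (hmem : f ∈ Ideal.span {(p : ℤ[T;T⁻¹]), T (p : ℤ) - 1}) :
    f ∈ Ideal.span {(p : ℤ[T;T⁻¹]), T (2 * (p : ℤ)) - 1} :=
  stmt_4_general p hodd f hf hmem
end

section
/- Let $A$ be a commutative ring, $c > 0$ an odd integer, and let $f \in A[q^{\pm 1}]$ be supported entirely on even exponents or entirely on odd exponents. If $f = g \cdot (q^{c} - 1)$ for some $g \in A[q^{\pm 1}]$, then there exists $h \in A[q^{\pm 1}]$ with $f = h \cdot (q^{c} - 1)(q^{c} + 1)$; that is, $f$ is divisible by $q^{2c} - 1$ in $A[q^{\pm 1}]$. -/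
/-!
Write `f = g * (q^n - 1)` coefficientwise as `f_i = g_{i-n} - g_i`. If `f` vanishes off a set
`P` of exponents that the shift by `n` exchanges with its complement (the even or the odd
integers, for `n = c` odd), then `g_{i-n} = g_i` whenever `i ∉ P`. Hence the part `h` of `g`
supported on `P` satisfies `h_{i-2n} - h_i = g_{i-n} - g_i = f_i` for `i ∈ P`, and both sides
vanish for `i ∉ P`, i.e. `f = h * (q^{2n} - 1)`.
-/

open LaurentPolynomial

namespace LaurentPolynomial

variable {R : Type*} [Ring R]

theorem coeff_mul_T_sub_one (g : R[T;T⁻¹]) (n i : ℤ) :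
    (g * (T n - 1)).coeff i = g.coeff (i - n) - g.coeff i := by
  rw [mul_sub, mul_one, AddMonoidAlgebra.coeff_sub, Finsupp.sub_apply, T,
    AddMonoidAlgebra.coeff_mul_single_apply, mul_one, ← sub_eq_add_neg]

theorem eq_ofCoeff_filter_mul_T_add_sub_one {P : ℤ → Prop} [DecidablePred P] {n : ℤ}
    (hP : ∀ i, P (i - n) ↔ ¬ P i) {f g : R[T;T⁻¹]} (hf : ∀ i ∈ f.coeff.support, P i)
    (hfg : f = g * (T n - 1)) :
    f = AddMonoidAlgebra.ofCoeff (g.coeff.filter P) * (T (n + n) - 1) := by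
  have hcoeff (i : ℤ) : f.coeff i = g.coeff (i - n) - g.coeff i := by
    rw [hfg, coeff_mul_T_sub_one]
  ext i
  have hP2 : P (i - n - n) ↔ P i := by rw [hP, hP, not_not]
  rw [coeff_mul_T_sub_one, AddMonoidAlgebra.coeff_ofCoeff, Finsupp.filter_apply,
    Finsupp.filter_apply, ← sub_sub]
  by_cases hi : P i
  · have hfi : f.coeff (i - n) = 0 :=
      Finsupp.notMem_support_iff.mp fun h => (hP i).mp (hf _ h) hi
    rw [if_pos (hP2.mpr hi), if_pos hi, hcoeff i, ← sub_eq_zero.mp ((hcoeff _).symm.trans hfi)]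
  · rw [if_neg (mt hP2.mp hi), if_neg hi, sub_zero,
      Finsupp.notMem_support_iff.mp fun h => hi (hf _ h)]

end LaurentPolynomial

theorem stmt_11_general (A : Type*) [CommRing A] (c : ℤ) (hodd : Odd c)
    (f : A[T;T⁻¹])
    (hf : (∀ i ∈ f.coeff.support, Even i) ∨ (∀ i ∈ f.coeff.support, Odd i))
    (g : A[T;T⁻¹]) (hfg : f = g * (T c - 1)) :
    ∃ h : A[T;T⁻¹], f = h * ((T c - 1) * (T c + 1)) := by
  have hT : ((T c - 1) * (T c + 1) : A[T;T⁻¹]) = T (c + c) - 1 := by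
    rw [T_add]; ring
  have hc : ¬ Even c := Int.not_even_iff_odd.mpr hodd
  rw [hT]
  rcases hf with hf | hf
  · exact ⟨_, eq_ofCoeff_filter_mul_T_add_sub_one (fun i => by simp [Int.even_sub, hc]) hf hfg⟩
  · exact ⟨_, eq_ofCoeff_filter_mul_T_add_sub_one (fun i => by simp [Int.odd_sub, hc]) hf hfg⟩

/-- Let `A` be a commutative ring and `c > 0` an odd integer. If `f ∈ A[q^{±1}]` is
supported entirely on even exponents or entirely on odd exponents and
`f = g * (q^c - 1)` for some `g`, then `f = h * (q^c - 1) * (q^c + 1)` for some `h`;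
that is, `f` is divisible by `q^{2c} - 1`. -/
theorem stmt_11 (A : Type*) [CommRing A] (c : ℤ) (hc : 0 < c) (hodd : Odd c)
    (f : A[T;T⁻¹])
    (hf : (∀ i ∈ f.coeff.support, Even i) ∨ (∀ i ∈ f.coeff.support, Odd i))
    (g : A[T;T⁻¹]) (hfg : f = g * (T c - 1)) :
    ∃ h : A[T;T⁻¹], f = h * ((T c - 1) * (T c + 1)) :=
  stmt_11_general A c hodd f hf g hfg
end
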